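/- arXiv:0907.4872 — 8 statements merged into one kernel-verified Lean document; each statement's English description precedes it below -/
import Mathlib

section
/- For every r ∈ ℝ^d, every z ∈ ℤ^d, and every n ∈ ℕ, one has M_r^n z = τ_r^n(z) - Σ_{j=1}^n M_r^{n-j} (0,...,0,v_j)^t, where v_j = {r·τ_r^{j-1}(z)}. -/
open Matrix Filter

noncomputable section

/-- Scalar product r·z of a real vector with an integer vector. -/
def srsDot {d : ℕ} (r : Fin d → ℝ) (z : Fin d → ℤ) : ℝ := ∑ i, r i * (z i : ℝ)

/-- The shift radix map τ_r(z) = (z_1,...,z_{d-1}, -⌊r·z⌋). -/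
def srsTau {d : ℕ} (r : Fin d → ℝ) (z : Fin d → ℤ) : Fin d → ℤ :=
  fun i => if h : (i : ℕ) + 1 < d then z ⟨(i : ℕ) + 1, h⟩ else -⌊srsDot r z⌋

/-- The companion matrix M_r of r. -/
def companion {d : ℕ} (r : Fin d → ℝ) : Matrix (Fin d) (Fin d) ℝ :=
  fun i j => if (i : ℕ) + 1 < d then (if (j : ℕ) = (i : ℕ) + 1 then 1 else 0) else -r j

/-- The vector (0,...,0,v)^t. -/
def digitVec {d : ℕ} (v : ℝ) : Fin d → ℝ := fun i => if (i : ℕ) + 1 = d then v else 0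

/-- Coordinatewise cast of an integer vector to a real vector. -/
def intToReal {d : ℕ} (z : Fin d → ℤ) : Fin d → ℝ := fun i => (z i : ℝ)

/-- M_r is contractive (spectral radius < 1). -/
def srsContractive {d : ℕ} (r : Fin d → ℝ) : Prop :=
  ∃ C > (0:ℝ), ∃ ρ : ℝ, 0 ≤ ρ ∧ ρ < 1 ∧
    ∀ (n : ℕ) (x : Fin d → ℝ), ‖((companion r) ^ n).mulVec x‖ ≤ C * ρ ^ n * ‖x‖

/-- The SRS tile T_r(x), as the set of limit points lim M_r^n z_{-n} with
τ_r^n(z_{-n}) = x. -/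
def srsTile {d : ℕ} (r : Fin d → ℝ) (x : Fin d → ℤ) : Set (Fin d → ℝ) :=
  {t | ∃ z : ℕ → (Fin d → ℤ), (∀ n, (srsTau r)^[n] (z n) = x) ∧
    Tendsto (fun n => ((companion r) ^ n).mulVec (intToReal (z n))) atTop (nhds t)}

theorem Matrix.pow_mulVec_eq_sub_sum_of_mulVec_eq_sub {ι R : Type*} [Fintype ι] [DecidableEq ι]
    [Ring R] (A : Matrix ι ι R) (x e : ℕ → ι → R) (hstep : ∀ k, A *ᵥ x k = x (k + 1) - e k)
    (n : ℕ) :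
    (A ^ n) *ᵥ x 0 = x n - ∑ j ∈ Finset.range n, (A ^ (n - 1 - j)) *ᵥ e j := by
  induction n with
  | zero => simp
  | succ n ih =>
    have hpow : ∀ j ∈ Finset.range n, A *ᵥ (A ^ (n - 1 - j)) *ᵥ e j = (A ^ (n - j)) *ᵥ e j := by
      intro j hj
      have hexp : n - 1 - j + 1 = n - j := by have := Finset.mem_range.mp hj; omega
      rw [mulVec_mulVec, ← pow_succ', hexp]
    rw [pow_succ', ← mulVec_mulVec, ih, mulVec_sub, hstep, mulVec_sum, Finset.sum_congr rfl hpow,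
      Finset.sum_range_succ]
    simp only [Nat.add_sub_cancel, Nat.sub_self, pow_zero, one_mulVec]
    abel

lemma companion_mulVec_apply {d : ℕ} (r : Fin d → ℝ) (x : Fin d → ℝ) (i : Fin d) :
    (companion r *ᵥ x) i = if h : (i : ℕ) + 1 < d then x ⟨i + 1, h⟩ else -∑ j, r j * x j := by
  by_cases h : (i : ℕ) + 1 < d
  · rw [dif_pos h, mulVec, dotProduct, Finset.sum_eq_single ⟨i + 1, h⟩]
    · simp [companion, h]
    · intro j _ hj
      simp [companion, h, Fin.ext_iff.not.mp hj]
    · simp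
  · simp [mulVec, dotProduct, companion, h]

lemma companion_mulVec_intToReal {d : ℕ} (r : Fin d → ℝ) (z : Fin d → ℤ) :
    companion r *ᵥ intToReal z = intToReal (srsTau r z) - digitVec (Int.fract (srsDot r z)) := by
  funext i
  rw [companion_mulVec_apply, Pi.sub_apply]
  by_cases h : (i : ℕ) + 1 < d
  · simp [h, intToReal, srsTau, digitVec, Nat.ne_of_lt h]
  · have hlast : (i : ℕ) + 1 = d := by omega
    simp only [intToReal, srsTau, digitVec, srsDot, dif_neg h, if_pos hlast, Int.cast_neg,
      Int.fract]
    ring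

theorem pow_mulVec_eq_iterate_sub_sum_general (d : ℕ) (r : Fin d → ℝ)
    (z : Fin d → ℤ) (n : ℕ) :
    ((companion r) ^ n).mulVec (intToReal z) =
      intToReal ((srsTau r)^[n] z) -
        ∑ j ∈ Finset.range n,
          ((companion r) ^ (n - 1 - j)).mulVec
            (digitVec (Int.fract (srsDot r ((srsTau r)^[j] z)))) :=
  (companion r).pow_mulVec_eq_sub_sum_of_mulVec_eq_sub (fun k => intToReal ((srsTau r)^[k] z))
    _ (fun k => by rw [companion_mulVec_intToReal, Function.iterate_succ_apply']) n

/-- M_r^n z = τ_r^n(z) - Σ_{j=1}^n M_r^{n-j}(0,...,0,v_j)^t where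
v_j = {r·τ_r^{j-1}(z)}. -/
theorem pow_mulVec_eq_iterate_sub_sum (d : ℕ) (hd : 0 < d) (r : Fin d → ℝ)
    (z : Fin d → ℤ) (n : ℕ) :
    ((companion r) ^ n).mulVec (intToReal z) =
      intToReal ((srsTau r)^[n] z) -
        ∑ j ∈ Finset.range n,
          ((companion r) ^ (n - 1 - j)).mulVec
            (digitVec (Int.fract (srsDot r ((srsTau r)^[j] z)))) :=
  pow_mulVec_eq_iterate_sub_sum_general d r z n
end
end

section
/- Let r ∈ ℝ^d with r_0 ≠ 0 (so that M_r is invertible), z_0 ∈ ℤ^d, and v_0, v_{-1}, ..., v_{-n+1} ∈ [0,1). Suppose that for each 1 ≤ k ≤ n, the vector z_{-k} := M_r^{-k}(z_0 - Σ_{j=0}^{k-1} M_r^j (0,...,0,v_{-j})^t) lies in ℤ^d. Then τ_r^n(z_{-n}) = z_0, and for each 1 ≤ k ≤ n one has τ_r(z_{-k}) = z_{-k+1} and v_{-k+1} = {r·z_{-k}}. -/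
/-!
Multiplying the defining relation of `z_{-(k+1)}` by `M_r` telescopes the sum, leaving
`M_r z_{-(k+1)} = z_{-k} - (0,…,0,v_{-k})`. Since `M_r` shifts coordinates and puts `-r·z` in the
last one, the first `d - 1` coordinates of this identity say that `τ_r` shifts `z_{-(k+1)}` to
`z_{-k}`, while the last says `r·z_{-(k+1)} = v_{-k} - (z_{-k})_{d-1}` with `v_{-k} ∈ [0,1)`, so
its floor is `-(z_{-k})_{d-1}` and its fractional part is `v_{-k}`.
-/

open Matrix Filter

noncomputable section

open Finset in
theorem Matrix.mulVec_inv_pow_succ_sub_sum {ι R : Type*} [Fintype ι] [DecidableEq ι]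
    [CommRing R] {M : Matrix ι ι R} (hM : IsUnit M.det) (y : ι → R) (w : ℕ → ι → R) (k : ℕ) :
    M *ᵥ (M⁻¹ ^ (k + 1) *ᵥ (y - ∑ j ∈ range (k + 1), M ^ j *ᵥ w j)) =
      M⁻¹ ^ k *ᵥ (y - ∑ j ∈ range k, M ^ j *ᵥ w j) - w k := by
  have hMinv : M * M⁻¹ ^ (k + 1) = M⁻¹ ^ k := by
    rw [pow_succ', ← mul_assoc, mul_nonsing_inv _ hM, one_mul]
  have hpow : M⁻¹ ^ k * M ^ k = 1 := by
    rw [inv_pow', nonsing_inv_mul _ (by simpa only [det_pow] using hM.pow k)]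
  rw [mulVec_mulVec, hMinv, sum_range_succ, ← sub_sub, mulVec_sub, mulVec_mulVec, hpow,
    one_mulVec]

theorem Function.iterate_eq_of_apply_succ {α : Type*} {f : α → α} {x : ℕ → α} {n : ℕ}
    (h : ∀ k < n, f (x (k + 1)) = x k) : f^[n] (x n) = x 0 := by
  induction n with
  | zero => rfl
  | succ n ih =>
    rw [Function.iterate_succ_apply, h n n.lt_succ_self]
    exact ih fun k hk => h k (by omega)

section Companion

variable {d : ℕ}

theorem companion_mulVec (r x : Fin d → ℝ) (i : Fin d) :
    (companion r *ᵥ x) i = if h : (i : ℕ) + 1 < d then x ⟨i + 1, h⟩ else -∑ j, r j * x j := by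
  unfold companion mulVec dotProduct
  split_ifs with h
  · rw [Finset.sum_eq_single ⟨i + 1, h⟩
      (fun j _ hj => by simp [h, Fin.ext_iff.not.mp hj]) (by simp)]
    simp [h]
  · simp [h]

theorem isUnit_det_companion (hd : 0 < d) (r : Fin d → ℝ) (hr0 : r ⟨0, hd⟩ ≠ 0) :
    IsUnit (companion r).det := by
  rw [isUnit_iff_ne_zero, ne_eq, ← exists_mulVec_eq_zero_iff]
  rintro ⟨x, hx0, hx⟩
  have hshift : ∀ i : Fin d, (i : ℕ) ≠ 0 → x i = 0 := by
    intro i hi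
    have := congrFun hx ⟨i - 1, by omega⟩
    rw [companion_mulVec, dif_pos (by simp only; omega)] at this
    rwa [show (⟨i - 1 + 1, _⟩ : Fin d) = i from Fin.ext (by simp only; omega)] at this
  have hlast := congrFun hx ⟨d - 1, by omega⟩
  rw [companion_mulVec, dif_neg (by simp only; omega),
    Finset.sum_eq_single ⟨0, hd⟩ (fun j _ hj => by rw [hshift j (Fin.ext_iff.not.mp hj),
      mul_zero]) (by simp)] at hlast
  have hx0' : x ⟨0, hd⟩ = 0 := by simpa [hr0] using hlast
  refine hx0 (funext fun i => ?_)
  by_cases hi : (i : ℕ) = 0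
  · rw [show i = ⟨0, hd⟩ from Fin.ext hi, hx0', Pi.zero_apply]
  · exact hshift i hi

theorem srsTau_eq_and_fract_of_companion_mulVec (hd : 0 < d) {r : Fin d → ℝ} {z z' : Fin d → ℤ}
    {v : ℝ} (hv : v ∈ Set.Ico 0 1) (h : companion r *ᵥ intToReal z = intToReal z' - digitVec v) :
    srsTau r z = z' ∧ v = Int.fract (srsDot r z) := by
  have hdot : srsDot r z = v - z' ⟨d - 1, by omega⟩ := by
    have := congrFun h ⟨d - 1, by omega⟩
    rw [companion_mulVec, dif_neg (by simp only; omega)] at this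
    simp only [Pi.sub_apply, digitVec, intToReal, if_pos (show d - 1 + 1 = d by omega)] at this
    unfold srsDot
    linarith
  have hfloor : ⌊srsDot r z⌋ = -z' ⟨d - 1, by omega⟩ := by
    rw [hdot, Int.floor_sub_intCast, Int.floor_eq_zero_iff.mpr hv, zero_sub]
  refine ⟨funext fun i => ?_, by rw [hdot, Int.fract_sub_intCast, Int.fract_eq_self.mpr hv]⟩
  unfold srsTau
  split_ifs with hi
  · have := congrFun h i
    rw [companion_mulVec, dif_pos hi] at this
    simp only [Pi.sub_apply, digitVec, intToReal, if_neg (show (i : ℕ) + 1 ≠ d by omega),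
      sub_zero] at this
    exact_mod_cast this
  · rw [hfloor, neg_neg]
    exact congrArg z' (Fin.ext (by simp only; omega))

end Companion

/-- if the backward divisions z_{-k} = M_r^{-k}(z_0 - Σ_{j<k} M_r^j (0,…,0,v_{-j})^t)
are all integer vectors, then τ_r^n(z_{-n}) = z_0, and τ_r(z_{-k}) = z_{-k+1} with
v_{-k+1} = {r·z_{-k}} for 1 ≤ k ≤ n. -/
theorem srs_backward_expansion (d : ℕ) (hd : 0 < d) (r : Fin d → ℝ)
    (hr0 : r ⟨0, hd⟩ ≠ 0) (n : ℕ) (v : ℕ → ℝ)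
    (hv : ∀ j < n, v j ∈ Set.Ico (0:ℝ) 1)
    (zm : ℕ → (Fin d → ℤ))
    (hzm : ∀ k, 1 ≤ k → k ≤ n →
      intToReal (zm k) = (((companion r)⁻¹) ^ k).mulVec
        (intToReal (zm 0) -
          ∑ j ∈ Finset.range k, ((companion r) ^ j).mulVec (digitVec (v j)))) :
    (srsTau r)^[n] (zm n) = zm 0 ∧
      ∀ k, 1 ≤ k → k ≤ n →
        srsTau r (zm k) = zm (k - 1) ∧ v (k - 1) = Int.fract (srsDot r (zm k)) := by
  have hM := isUnit_det_companion hd r hr0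
  have hback : ∀ k ≤ n, intToReal (zm k) = (companion r)⁻¹ ^ k *ᵥ
      (intToReal (zm 0) - ∑ j ∈ Finset.range k, companion r ^ j *ᵥ digitVec (v j)) := by
    rintro (_ | k) hk
    · simp
    · exact hzm (k + 1) k.succ_pos hk
  have hstep : ∀ k < n,
      srsTau r (zm (k + 1)) = zm k ∧ v k = Int.fract (srsDot r (zm (k + 1))) := fun k hk =>
    srsTau_eq_and_fract_of_companion_mulVec hd (hv k hk) <| by
      rw [hback (k + 1) hk, hback k hk.le, mulVec_inv_pow_succ_sub_sum hM]
  refine ⟨Function.iterate_eq_of_apply_succ fun k hk => (hstep k hk).1, ?_⟩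
  rintro (_ | k) hk hkn
  · omega
  · exact hstep k hkn
end
end

section
/- If r = (r_0,...,r_{d-1}) ∈ ℝ^d with r_0 ≠ 0 and 0 < |r_0| < 1, then the map τ_r : ℤ^d → ℤ^d is surjective. -/
/-!
A preimage of `x` under `τ_r` must be a right shift of `x`, with the first coordinate `z₀` free.
Changing `z₀` by `n` changes `r · z` by `r₀ n`; as these steps have length `|r₀| ≤ 1`, the values
`-⌊r · z⌋` run through all of `ℤ`, so `z₀` can be chosen to produce the last coordinate of `x`.
-/

open Matrix Filter

noncomputable section

lemma exists_int_floor_add_mul_eq_of_pos {a : ℝ} (ha : 0 < a) (ha1 : a ≤ 1) (c : ℝ) (m : ℤ) :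
    ∃ n : ℤ, ⌊c + a * n⌋ = m := by
  refine ⟨⌈(m - c) / a⌉, Int.floor_eq_iff.mpr ⟨?_, ?_⟩⟩
  · have := mul_le_mul_of_nonneg_left (Int.le_ceil ((m - c) / a)) ha.le
    rw [mul_div_cancel₀ _ ha.ne'] at this
    linarith
  · have := mul_lt_mul_of_pos_left (Int.ceil_lt_add_one ((m - c) / a)) ha
    rw [mul_add, mul_div_cancel₀ _ ha.ne'] at this
    linarith

lemma exists_int_floor_add_mul_eq {a : ℝ} (ha : a ≠ 0) (ha1 : |a| ≤ 1) (c : ℝ) (m : ℤ) :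
    ∃ n : ℤ, ⌊c + a * n⌋ = m := by
  rcases ha.lt_or_gt with hneg | hpos
  · obtain ⟨n, hn⟩ := exists_int_floor_add_mul_eq_of_pos (neg_pos.mpr hneg)
      (by rwa [abs_of_neg hneg] at ha1) c m
    exact ⟨-n, by simpa using hn⟩
  · exact exists_int_floor_add_mul_eq_of_pos hpos (by rwa [abs_of_pos hpos] at ha1) c m

section srsTau

variable {d : ℕ} (r : Fin d → ℝ)

lemma srsDot_add_single (z : Fin d → ℤ) (j : Fin d) (n : ℤ) :
    srsDot r (z + Pi.single j n) = srsDot r z + r j * n := by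
  simp only [srsDot, Pi.add_apply, Int.cast_add, mul_add, Finset.sum_add_distrib]
  congr 1
  rw [Finset.sum_eq_single j (fun i _ hi => by simp [hi]) (by simp)]
  simp

lemma srsTau_apply_of_lt (z : Fin d → ℤ) {i : Fin d} (hi : (i : ℕ) + 1 < d) :
    srsTau r z i = z ⟨i + 1, hi⟩ :=
  dif_pos hi

lemma srsTau_apply_of_not_lt (z : Fin d → ℤ) {i : Fin d} (hi : ¬(i : ℕ) + 1 < d) :
    srsTau r z i = -⌊srsDot r z⌋ :=
  dif_neg hi

lemma srsTau_add_single_zero_apply_of_lt (hd : 0 < d) (z : Fin d → ℤ) (n : ℤ) {i : Fin d}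
    (hi : (i : ℕ) + 1 < d) : srsTau r (z + Pi.single ⟨0, hd⟩ n) i = srsTau r z i := by
  rw [srsTau_apply_of_lt r _ hi, srsTau_apply_of_lt r _ hi, Pi.add_apply,
    Pi.single_eq_of_ne (by simp [Fin.ext_iff]), add_zero]

lemma exists_srsTau_apply_eq_of_lt (x : Fin d → ℤ) :
    ∃ w : Fin d → ℤ, ∀ i : Fin d, (i : ℕ) + 1 < d → srsTau r w i = x i :=
  ⟨fun j => x ⟨j - 1, lt_of_le_of_lt (Nat.sub_le _ _) j.2⟩, fun _ hi => srsTau_apply_of_lt r _ hi⟩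

end srsTau

/-- if 0 < |r_0| < 1 then τ_r is surjective. -/
theorem srsTau_surjective (d : ℕ) (hd : 0 < d) (r : Fin d → ℝ)
    (hr0 : r ⟨0, hd⟩ ≠ 0) (hr1 : |r ⟨0, hd⟩| < 1) :
    Function.Surjective (srsTau r) := by
  intro x
  obtain ⟨w, hw⟩ := exists_srsTau_apply_eq_of_lt r x
  obtain ⟨n, hn⟩ := exists_int_floor_add_mul_eq hr0 hr1.le (srsDot r w) (-x ⟨d - 1, by omega⟩)
  refine ⟨w + Pi.single ⟨0, hd⟩ n, funext fun i => ?_⟩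
  by_cases hi : (i : ℕ) + 1 < d
  · rw [srsTau_add_single_zero_apply_of_lt r hd w n hi, hw i hi]
  · have hlast : i = ⟨d - 1, by omega⟩ := Fin.ext (by simp only; omega)
    rw [srsTau_apply_of_not_lt r _ hi, srsDot_add_single, hn, neg_neg, hlast]
end
end

section
/- Let r ∈ int(D_d) be reduced. Then the family of SRS tiles {T_r(x) : x ∈ ℤ^d} covers ℝ^d, i.e., ⋃_{x ∈ ℤ^d} T_r(x) = ℝ^d. -/
open Matrix Filter

noncomputable section

/-!
Since `r₀ ≠ 0` the companion matrix `M` is invertible, so rounding `M⁻ⁿ t` down gives integer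
vectors `zₙ` with `‖Mⁿ zₙ - t‖ ≤ C ρⁿ`. One application of `τ` changes `Mᵐ z` by `Mᵐ` of a digit
vector of norm `< 1`, so `Mᵐ τᵏ(z)` stays within `C ρᵐ / (1 - ρ)` of `Mᵐ⁺ᵏ z`. With `m = 0` this
confines the orbit points `τⁿ(zₙ)` to a finite set of lattice points, so some `x` equals
`τⁿ(zₙ)` for infinitely many `n`; along those `n`, the vectors `τⁿ⁻ᵐ(zₙ)` are `m`-fold preimages
of `x` whose images under `Mᵐ` converge to `t`.
-/

open Topology

section

variable {d : ℕ}

lemma companion_mulVec_apply_of_lt (r w : Fin d → ℝ) {i : Fin d} (h : (i : ℕ) + 1 < d) :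
    (companion r *ᵥ w) i = w ⟨i + 1, h⟩ := by
  simp only [mulVec, dotProduct, companion, if_pos h, ite_mul, one_mul, zero_mul]
  rw [Finset.sum_eq_single ⟨i + 1, h⟩ (fun j _ hj => if_neg fun e => hj (Fin.ext e)) (by simp)]
  simp

lemma companion_mulVec_apply_of_not_lt (r w : Fin d → ℝ) {i : Fin d} (h : ¬(i : ℕ) + 1 < d) :
    (companion r *ᵥ w) i = -∑ j, r j * w j := by
  simp [mulVec, dotProduct, companion, h]

lemma eq_zero_of_companion_mulVec_eq_zero (hd : 0 < d) {r : Fin d → ℝ} (hr0 : r ⟨0, hd⟩ ≠ 0)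
    {w : Fin d → ℝ} (hw : companion r *ᵥ w = 0) : w = 0 := by
  have htail : ∀ j : Fin d, (j : ℕ) ≠ 0 → w j = 0 := fun j hj => by
    have := companion_mulVec_apply_of_lt r w (i := ⟨j - 1, by omega⟩) (by simp; omega)
    simpa [hw, Nat.sub_add_cancel (Nat.pos_of_ne_zero hj)] using this.symm
  have hhead : w ⟨0, hd⟩ = 0 := by
    have := companion_mulVec_apply_of_not_lt r w (i := ⟨d - 1, by omega⟩) (by simp; omega)
    rw [hw, Finset.sum_eq_single ⟨0, hd⟩
      (fun j _ hj => by rw [htail j (Fin.val_ne_iff.2 hj), mul_zero]) (by simp)] at this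
    simpa [hr0] using this
  funext j
  by_cases hj : (j : ℕ) = 0
  · rwa [show j = ⟨0, hd⟩ from Fin.ext hj]
  · exact htail j hj

lemma companion_isUnit (hd : 0 < d) {r : Fin d → ℝ} (hr0 : r ⟨0, hd⟩ ≠ 0) :
    IsUnit (companion r) :=
  mulVec_injective_iff_isUnit.1 fun a b hab =>
    sub_eq_zero.1 (eq_zero_of_companion_mulVec_eq_zero hd hr0 (by rw [mulVec_sub, hab, sub_self]))

lemma norm_digitVec_le (v : ℝ) : ‖(digitVec v : Fin d → ℝ)‖ ≤ ‖v‖ :=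
  (pi_norm_le_iff_of_nonneg (norm_nonneg v)).2 fun i => by
    unfold digitVec; split_ifs <;> simp

lemma intToReal_srsTau (r : Fin d → ℝ) (z : Fin d → ℤ) :
    intToReal (srsTau r z) = companion r *ᵥ intToReal z + digitVec (Int.fract (srsDot r z)) := by
  funext i
  by_cases h : (i : ℕ) + 1 < d
  · simp [srsTau, intToReal, companion_mulVec_apply_of_lt _ _ h, digitVec, h, h.ne]
  · have hi : (i : ℕ) + 1 = d := by omega
    simp [srsTau, intToReal, companion_mulVec_apply_of_not_lt _ _ h, digitVec, hi, srsDot]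
    rw [← Int.self_sub_floor]
    ring

lemma norm_intToReal_srsTau_sub_le_one (r : Fin d → ℝ) (z : Fin d → ℤ) :
    ‖intToReal (srsTau r z) - companion r *ᵥ intToReal z‖ ≤ 1 := by
  rw [intToReal_srsTau, add_sub_cancel_left]
  refine (norm_digitVec_le _).trans ?_
  rw [Real.norm_of_nonneg (Int.fract_nonneg _)]
  exact (Int.fract_lt_one _).le

lemma norm_intToReal (x : Fin d → ℤ) : ‖intToReal x‖ = ‖x‖ := rfl

lemma finite_setOf_norm_intToReal_le (B : ℝ) : {x : Fin d → ℤ | ‖intToReal x‖ ≤ B}.Finite := by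
  simpa only [norm_intToReal, ← mem_closedBall_zero_iff, Set.ofPred_mem_eq]
    using (isCompact_closedBall (0 : Fin d → ℤ) B).finite_of_discrete

section Contraction

variable {r : Fin d → ℝ} {C ρ : ℝ}

lemma norm_companion_pow_mulVec_iterate_sub_le (hC : 0 ≤ C) (hρ0 : 0 ≤ ρ) (hρ1 : ρ < 1)
    (hb : ∀ (n : ℕ) (x : Fin d → ℝ), ‖(companion r ^ n) *ᵥ x‖ ≤ C * ρ ^ n * ‖x‖)
    (z : Fin d → ℤ) (k m : ℕ) :
    ‖companion r ^ m *ᵥ intToReal ((srsTau r)^[k] z) - companion r ^ (m + k) *ᵥ intToReal z‖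
      ≤ C * ρ ^ m / (1 - ρ) := by
  have hρ : 0 < 1 - ρ := sub_pos.2 hρ1
  induction k generalizing m with
  | zero => simpa using by positivity
  | succ k ih =>
    set w := (srsTau r)^[k] z
    have hsplit : companion r ^ m *ᵥ intToReal ((srsTau r)^[k + 1] z)
          - companion r ^ (m + (k + 1)) *ᵥ intToReal z
        = companion r ^ m *ᵥ (intToReal (srsTau r w) - companion r *ᵥ intToReal w)
          + (companion r ^ (m + 1) *ᵥ intToReal w - companion r ^ (m + 1 + k) *ᵥ intToReal z) := by
      rw [Function.iterate_succ_apply', mulVec_sub, mulVec_mulVec, ← pow_succ,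
        show m + (k + 1) = m + 1 + k by ring]
      abel
    calc _ = ‖_‖ := by rw [hsplit]
      _ ≤ C * ρ ^ m * 1 + C * ρ ^ (m + 1) / (1 - ρ) := by
        refine norm_add_le_of_le ((hb _ _).trans ?_) (ih _)
        gcongr
        exact norm_intToReal_srsTau_sub_le_one r w
      _ = C * ρ ^ m / (1 - ρ) := by field_simp [hρ.ne']; ring

lemma exists_companion_pow_mulVec_near (hd : 0 < d) (hr0 : r ⟨0, hd⟩ ≠ 0) (hC : 0 ≤ C)
    (hρ0 : 0 ≤ ρ) (hb : ∀ (n : ℕ) (x : Fin d → ℝ), ‖(companion r ^ n) *ᵥ x‖ ≤ C * ρ ^ n * ‖x‖)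
    (t : Fin d → ℝ) (n : ℕ) :
    ∃ z : Fin d → ℤ, ‖companion r ^ n *ᵥ intToReal z - t‖ ≤ C * ρ ^ n := by
  obtain ⟨y, rfl⟩ := mulVec_surjective_iff_isUnit.2 ((companion_isUnit hd hr0).pow n) t
  refine ⟨fun i => ⌊y i⌋, ?_⟩
  have hfloor : ‖intToReal (fun i => ⌊y i⌋) - y‖ ≤ 1 :=
    (pi_norm_le_iff_of_nonneg zero_le_one).2 fun i => by
      rw [Pi.sub_apply, intToReal, Real.norm_eq_abs, abs_sub_comm, Int.self_sub_floor,
        abs_of_nonneg (Int.fract_nonneg _)]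
      exact (Int.fract_lt_one _).le
  calc _ = ‖companion r ^ n *ᵥ (intToReal (fun i => ⌊y i⌋) - y)‖ := by rw [mulVec_sub]
    _ ≤ C * ρ ^ n * 1 := (hb _ _).trans (by gcongr)
    _ = C * ρ ^ n := mul_one _

lemma exists_frequently_srsTau_iterate_eq (hC : 0 ≤ C) (hρ0 : 0 ≤ ρ) (hρ1 : ρ < 1)
    (hb : ∀ (n : ℕ) (x : Fin d → ℝ), ‖(companion r ^ n) *ᵥ x‖ ≤ C * ρ ^ n * ‖x‖)
    {z : ℕ → Fin d → ℤ} {t : Fin d → ℝ}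
    (hzt : Tendsto (fun n => companion r ^ n *ᵥ intToReal (z n)) atTop (𝓝 t)) :
    ∃ x, ∃ᶠ n in atTop, (srsTau r)^[n] (z n) = x := by
  obtain ⟨B, hB⟩ := isBounded_iff_forall_norm_le.1 (Metric.isBounded_range_of_tendsto _ hzt)
  have hbound : ∀ n, ‖intToReal ((srsTau r)^[n] (z n))‖ ≤ B + C / (1 - ρ) := fun n => by
    have hdrift := norm_companion_pow_mulVec_iterate_sub_le hC hρ0 hρ1 hb (z n) n 0
    rw [pow_zero, one_mulVec, zero_add, pow_zero, mul_one] at hdrift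
    exact (norm_le_norm_add_norm_sub' _ _).trans (add_le_add (hB _ ⟨n, rfl⟩) hdrift)
  obtain ⟨x, -, hx⟩ := (finite_setOf_norm_intToReal_le (B + C / (1 - ρ))).frequently_exists
    (l := atTop) (p := fun x n => (srsTau r)^[n] (z n) = x) |>.1
    (Frequently.of_forall fun n => ⟨_, hbound n, rfl⟩)
  exact ⟨x, hx⟩

lemma mem_srsTile_of_frequently (hC : 0 ≤ C) (hρ0 : 0 ≤ ρ) (hρ1 : ρ < 1)
    (hb : ∀ (n : ℕ) (x : Fin d → ℝ), ‖(companion r ^ n) *ᵥ x‖ ≤ C * ρ ^ n * ‖x‖)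
    {z : ℕ → Fin d → ℤ} {t : Fin d → ℝ} {x : Fin d → ℤ}
    (hzt : Tendsto (fun n => companion r ^ n *ᵥ intToReal (z n)) atTop (𝓝 t))
    (hx : ∃ᶠ n in atTop, (srsTau r)^[n] (z n) = x) :
    t ∈ srsTile r x := by
  obtain ⟨φ, hφ, hφx⟩ := extraction_of_frequently_atTop hx
  have hle : ∀ m, m + (φ m - m) = φ m := fun m => Nat.add_sub_cancel' (hφ.id_le m)
  refine ⟨fun m => (srsTau r)^[φ m - m] (z (φ m)), fun m => ?_, ?_⟩
  · rw [← Function.iterate_add_apply, hle, hφx]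
  · have herr : Tendsto (fun m => C * ρ ^ m / (1 - ρ)) atTop (𝓝 0) := by
      simpa using ((tendsto_pow_atTop_nhds_zero_of_lt_one hρ0 hρ1).const_mul C).div_const (1 - ρ)
    refine tendsto_of_tendsto_of_dist (hzt.comp hφ.tendsto_atTop)
      (squeeze_zero (fun _ => dist_nonneg) (fun m => ?_) herr)
    have hdrift := norm_companion_pow_mulVec_iterate_sub_le hC hρ0 hρ1 hb (z (φ m)) (φ m - m) m
    rwa [hle, ← dist_eq_norm, dist_comm] at hdrift

end Contraction

end

/-- the SRS tiles cover ℝ^d. -/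
theorem srsTile_covering (d : ℕ) (hd : 0 < d) (r : Fin d → ℝ)
    (hr0 : r ⟨0, hd⟩ ≠ 0) (hcontr : srsContractive r) :
    ⋃ x : Fin d → ℤ, srsTile r x = Set.univ := by
  obtain ⟨C, hC, ρ, hρ0, hρ1, hb⟩ := hcontr
  refine Set.eq_univ_of_forall fun t => Set.mem_iUnion.2 ?_
  choose z hz using exists_companion_pow_mulVec_near hd hr0 hC.le hρ0 hb t
  have hzt : Tendsto (fun n => companion r ^ n *ᵥ intToReal (z n)) atTop (𝓝 t) :=
    tendsto_iff_norm_sub_tendsto_zero.2 <| squeeze_zero (fun _ => norm_nonneg _) hz <| by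
      simpa using (tendsto_pow_atTop_nhds_zero_of_lt_one hρ0 hρ1).const_mul C
  obtain ⟨x, hx⟩ := exists_frequently_srsTau_iterate_eq hC.le hρ0 hρ1 hb hzt
  exact ⟨x, mem_srsTile_of_frequently hC.le hρ0 hρ1 hb hzt hx⟩
end
end

section
/- For r = (9/10, -11/20), the points z_1 = (-1,-1), z_2 = (-1,1), z_3 = (1,2), z_4 = (2,1), z_5 = (1,-1) form a purely periodic cycle under τ_r (τ_r maps z_1 → z_2 → z_3 → z_4 → z_5 → z_1), and for each i the preimage τ_r^{-1}(z_i) is the singleton {z_{i-1}} (indices mod 5). Consequently each SRS tile T_r(z_i) consists of the single point 0. -/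
open Matrix Filter

noncomputable section

/-!
Every point of the cycle has exactly one `τ_r`-preimage, and it lies on the cycle again. So the
backward orbits `z_{-n}` of a cycle point run around the cycle and stay bounded, and
`M_r^n z_{-n} → 0` because `M_r` is contractive. The matrix `M_r` itself is not a contraction for
the ∞-norm (`‖M_r‖_∞ = 29/20`), but its fifth power is: `‖M_r^5‖_∞ < (49/50)^5`.
-/

section Contraction

theorem exists_norm_pow_le_mul_pow {R : Type*} [SeminormedRing R] (a : R) {k : ℕ} {ρ : ℝ}
    (hk : 0 < k) (hρ : 0 < ρ) (h : ‖a ^ k‖ ≤ ρ ^ k) : ∃ C > 0, ∀ n, ‖a ^ n‖ ≤ C * ρ ^ n := by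
  refine ⟨1 + ∑ m ∈ Finset.range k, ‖a ^ m‖ / ρ ^ m, by positivity, fun n => ?_⟩
  have hshift : ∀ m q, ‖a ^ (m + k * q)‖ ≤ ‖a ^ m‖ * ρ ^ (k * q) := by
    intro m q
    induction q with
    | zero => simp
    | succ q ih =>
      calc ‖a ^ (m + k * (q + 1))‖ = ‖a ^ (m + k * q) * a ^ k‖ := by rw [← pow_add]; ring_nf
        _ ≤ ‖a ^ (m + k * q)‖ * ‖a ^ k‖ := norm_mul_le _ _
        _ ≤ ‖a ^ m‖ * ρ ^ (k * q) * ρ ^ k := by gcongr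
        _ = ‖a ^ m‖ * ρ ^ (k * (q + 1)) := by ring
  have hm : n % k < k := Nat.mod_lt n hk
  have hterm : ‖a ^ (n % k)‖ / ρ ^ (n % k) ≤ 1 + ∑ m ∈ Finset.range k, ‖a ^ m‖ / ρ ^ m := by
    have := Finset.single_le_sum (f := fun m => ‖a ^ m‖ / ρ ^ m) (fun m _ => by positivity)
      (Finset.mem_range.2 hm)
    linarith
  calc ‖a ^ n‖ = ‖a ^ (n % k + k * (n / k))‖ := by rw [Nat.mod_add_div]
    _ ≤ ‖a ^ (n % k)‖ * ρ ^ (k * (n / k)) := hshift _ _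
    _ = ‖a ^ (n % k)‖ / ρ ^ (n % k) * (ρ ^ (n % k) * ρ ^ (k * (n / k))) := by field_simp
    _ = ‖a ^ (n % k)‖ / ρ ^ (n % k) * ρ ^ n := by rw [← pow_add, Nat.mod_add_div]
    _ ≤ _ := by gcongr

attribute [local instance] Matrix.linftyOpSeminormedAddCommGroup in
theorem Matrix.linfty_opNorm_le_of_sum_le {m n : Type*} [Fintype m] [Fintype n]
    {α : Type*} [SeminormedAddCommGroup α] {A : Matrix m n α} {c : ℝ} (hc : 0 ≤ c)
    (h : ∀ i, ∑ j, ‖A i j‖ ≤ c) : ‖A‖ ≤ c := by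
  lift c to NNReal using hc
  rw [Matrix.linfty_opNorm_def, NNReal.coe_le_coe]
  refine Finset.sup_le fun i _ => ?_
  rw [← NNReal.coe_le_coe, NNReal.coe_sum]
  exact h i

attribute [local instance] Matrix.linftyOpNormedRing

theorem srsContractive_of_norm_pow_le {d : ℕ} {r : Fin d → ℝ} {k : ℕ} {ρ : ℝ} (hk : 0 < k)
    (hρ0 : 0 < ρ) (hρ1 : ρ < 1) (h : ‖companion r ^ k‖ ≤ ρ ^ k) : srsContractive r := by
  obtain ⟨C, hC, hpow⟩ := exists_norm_pow_le_mul_pow (companion r) hk hρ0 h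
  refine ⟨C, hC, ρ, hρ0.le, hρ1, fun n x => ?_⟩
  calc ‖(companion r ^ n) *ᵥ x‖ ≤ ‖companion r ^ n‖ * ‖x‖ := Matrix.linfty_opNorm_mulVec _ _
    _ ≤ C * ρ ^ n * ‖x‖ := by gcongr; exact hpow n

end Contraction

section Tile

variable {d : ℕ} {r : Fin d → ℝ}

theorem tendsto_companion_pow_mulVec_zero (hr : srsContractive r) {u : ℕ → Fin d → ℝ} {B : ℝ}
    (hu : ∀ n, ‖u n‖ ≤ B) : Tendsto (fun n => (companion r ^ n) *ᵥ u n) atTop (nhds 0) := by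
  obtain ⟨C, hC, ρ, hρ0, hρ1, hbound⟩ := hr
  have hgeom : Tendsto (fun n => C * ρ ^ n * B) atTop (nhds 0) := by
    simpa using ((tendsto_pow_atTop_nhds_zero_of_lt_one hρ0 hρ1).const_mul C).mul_const B
  refine squeeze_zero_norm (fun n => (hbound n (u n)).trans ?_) hgeom
  gcongr
  exact hu n

theorem srsTile_eq_singleton_zero (hr : srsContractive r) (S : Finset (Fin d → ℤ))
    (hclosed : ∀ w, srsTau r w ∈ S → w ∈ S) (hsurj : ∀ y ∈ S, ∃ w ∈ S, srsTau r w = y)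
    {x : Fin d → ℤ} (hx : x ∈ S) : srsTile r x = {0} := by
  have hbounded : ∀ y ∈ S, ‖intToReal y‖ ≤ ∑ y ∈ S, ‖intToReal y‖ := fun y hy =>
    Finset.single_le_sum (f := fun y => ‖intToReal y‖) (fun _ _ => norm_nonneg _) hy
  ext t
  constructor
  · rintro ⟨z, hz, hlim⟩
    have hcompl : Set.MapsTo (srsTau r) (↑S)ᶜ (↑S)ᶜ := fun w hw hτw => hw (hclosed w hτw)
    have hzS : ∀ n, z n ∈ S := fun n => by
      by_contra hzn
      exact hcompl.iterate n hzn (by simpa [hz n] using hx)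
    exact tendsto_nhds_unique hlim
      (tendsto_companion_pow_mulVec_zero hr fun n => hbounded _ (hzS n))
  · rintro rfl
    choose! g hgS hg using hsurj
    have hgS' : Set.MapsTo g S S := fun y hy => hgS y hy
    have hchain : ∀ n, ∀ y ∈ S, (srsTau r)^[n] (g^[n] y) = y := by
      intro n
      induction n with
      | zero => simp
      | succ n ih =>
        intro y hy
        rw [Function.iterate_succ_apply, Function.iterate_succ_apply', hg _ (hgS'.iterate n hy),
          ih y hy]
    exact ⟨fun n => g^[n] x, fun n => hchain n x hx,
      tendsto_companion_pow_mulVec_zero hr fun n => hbounded _ (hgS'.iterate n hx)⟩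

end Tile

theorem srsTau_fin_two (r : Fin 2 → ℝ) (w : Fin 2 → ℤ) :
    srsTau r w = ![w 1, -⌊r 0 * w 0 + r 1 * w 1⌋] := by
  ext i
  fin_cases i <;> simp [srsTau, srsDot, Fin.sum_univ_two]

theorem companion_fin_two (r : Fin 2 → ℝ) : companion r = !![0, 1; -r 0, -r 1] := by
  ext i j
  fin_cases i <;> fin_cases j <;> simp [companion]

theorem srsTau_example (w : Fin 2 → ℤ) :
    srsTau ![9/10, -11/20] w = ![w 1, -((18 * w 0 - 11 * w 1) / 20)] := by
  have hdot : (9/10 : ℝ) * w 0 + -11/20 * w 1 =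
      (((18 * w 0 - 11 * w 1 : ℤ) / (20 : ℕ) : ℚ) : ℝ) := by
    push_cast
    ring
  rw [srsTau_fin_two]
  simp only [cons_val_zero, cons_val_one]
  rw [hdot, Rat.floor_cast, Rat.floor_intCast_div_natCast]
  rfl

theorem srsTau_example_eq_iff (w : Fin 2 → ℤ) (a b : ℤ) :
    srsTau ![9/10, -11/20] w = ![a, b] ↔ w 1 = a ∧ -((18 * w 0 - 11 * w 1) / 20) = b := by
  simp only [srsTau_example, funext_iff, Fin.forall_fin_two, cons_val_zero, cons_val_one]

section

attribute [local instance] Matrix.linftyOpNormedRing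

theorem companion_example_pow_five : companion ![(9/10 : ℝ), -11/20] ^ 5 =
    !![59301/80000, 13561/160000; -122049/1600000, 2521211/3200000] := by
  rw [companion_fin_two]
  simp [pow_succ]
  norm_num

theorem srsContractive_example : srsContractive ![(9/10 : ℝ), -11/20] := by
  refine srsContractive_of_norm_pow_le (k := 5) (ρ := 49/50) (by norm_num) (by norm_num)
    (by norm_num) ?_
  rw [companion_example_pow_five]
  refine Matrix.linfty_opNorm_le_of_sum_le (by norm_num) fun i => ?_
  fin_cases i <;> simp [Fin.sum_univ_two, abs_of_pos] <;> norm_num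

end

/-- for r = (9/10, -11/20), the five listed points form a purely
periodic cycle, each has a singleton preimage, and each of their SRS tiles is {0}. -/
theorem srsTile_singleton_example :
    let r : Fin 2 → ℝ := ![9/10, -11/20]
    let z1 : Fin 2 → ℤ := ![-1, -1]
    let z2 : Fin 2 → ℤ := ![-1, 1]
    let z3 : Fin 2 → ℤ := ![1, 2]
    let z4 : Fin 2 → ℤ := ![2, 1]
    let z5 : Fin 2 → ℤ := ![1, -1]
    srsTau r z1 = z2 ∧ srsTau r z2 = z3 ∧ srsTau r z3 = z4 ∧
    srsTau r z4 = z5 ∧ srsTau r z5 = z1 ∧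
    (∀ w : Fin 2 → ℤ, srsTau r w = z1 ↔ w = z5) ∧
    (∀ w : Fin 2 → ℤ, srsTau r w = z2 ↔ w = z1) ∧
    (∀ w : Fin 2 → ℤ, srsTau r w = z3 ↔ w = z2) ∧
    (∀ w : Fin 2 → ℤ, srsTau r w = z4 ↔ w = z3) ∧
    (∀ w : Fin 2 → ℤ, srsTau r w = z5 ↔ w = z4) ∧
    srsTile r z1 = {0} ∧ srsTile r z2 = {0} ∧ srsTile r z3 = {0} ∧
    srsTile r z4 = {0} ∧ srsTile r z5 = {0} := by
  intro r z1 z2 z3 z4 z5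
  obtain ⟨p1, p2, p3, p4, p5⟩ : (∀ w, srsTau r w = z1 ↔ w = z5) ∧
      (∀ w, srsTau r w = z2 ↔ w = z1) ∧ (∀ w, srsTau r w = z3 ↔ w = z2) ∧
      (∀ w, srsTau r w = z4 ↔ w = z3) ∧ (∀ w, srsTau r w = z5 ↔ w = z4) := by
    refine ⟨fun w => ?_, fun w => ?_, fun w => ?_, fun w => ?_, fun w => ?_⟩ <;>
      simp only [r, z1, z2, z3, z4, z5, srsTau_example_eq_iff] <;>
      simp only [funext_iff, Fin.forall_fin_two, cons_val_zero, cons_val_one] <;> omega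
  let S : Finset (Fin 2 → ℤ) := {z1, z2, z3, z4, z5}
  have hclosed : ∀ w, srsTau r w ∈ S → w ∈ S := fun w => by
    simp only [S, Finset.mem_insert, Finset.mem_singleton, p1, p2, p3, p4, p5]
    tauto
  have hsurj : ∀ y ∈ S, ∃ w ∈ S, srsTau r w = y := by
    simp only [S, Finset.forall_mem_insert, Finset.mem_singleton, forall_eq]
    exact ⟨⟨z5, by simp, (p1 z5).2 rfl⟩, ⟨z1, by simp, (p2 z1).2 rfl⟩, ⟨z2, by simp, (p3 z2).2 rfl⟩,
      ⟨z3, by simp, (p4 z3).2 rfl⟩, ⟨z4, by simp, (p5 z4).2 rfl⟩⟩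
  have htile : ∀ x ∈ S, srsTile r x = {0} := fun x hx =>
    srsTile_eq_singleton_zero srsContractive_example S hclosed hsurj hx
  exact ⟨(p2 z1).2 rfl, (p3 z2).2 rfl, (p4 z3).2 rfl, (p5 z4).2 rfl, (p1 z5).2 rfl,
    p1, p2, p3, p4, p5, htile z1 (by simp [S]), htile z2 (by simp [S]), htile z3 (by simp [S]),
    htile z4 (by simp [S]), htile z5 (by simp [S])⟩
end
end

section
/- Let r ∈ ℝ with 0 < r < 1, and τ_r : ℤ → ℤ given by τ_r(z) = -⌊rz⌋. If x_0 > y_0 are integers, then for every n ∈ ℕ and every x_n ∈ τ_r^{-n}(x_0), y_n ∈ τ_r^{-n}(y_0), one has (-1)^n x_n > (-1)^n y_n. Consequently, for distinct x, y ∈ ℤ the one-dimensional SRS tiles T_r(x) and T_r(y) intersect in at most one point, and {T_r(x) : x ∈ ℤ} is a tiling of ℝ by (possibly degenerate) intervals. -/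
open Filter

noncomputable section

/-- One-dimensional shift radix map τ_r(z) = -⌊rz⌋. -/
def tau1 (r : ℝ) (z : ℤ) : ℤ := -⌊r * (z : ℝ)⌋

/-- One-dimensional SRS tile T_r(x) = Lim (-r)^n τ_r^{-n}(x). -/
def tile1 (r : ℝ) (x : ℤ) : Set ℝ :=
  {t | ∃ z : ℕ → ℤ, (∀ n, (tau1 r)^[n] (z n) = x) ∧
    Tendsto (fun n => (-r) ^ n * ((z n : ℤ) : ℝ)) atTop (nhds t)}

/-!
Read the points `(-r)^n z` in the coordinate `m = (-1)^n z`, so that they become `r^n m`.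
Since `τ_r` is antitone, the label `m ↦ τ_r^n((-1)^n m)` is monotone (this is the sign rule),
and it is onto, so its fibres are consecutive integer intervals `[lo_n(x), lo_n(x+1))`. One step
of `τ_r` multiplies `m` by `r` up to an error less than `1`, so `r^n lo_n(x)` moves by at most
`r^n` from level `n` to `n + 1`; its limit `b(x)` is nondecreasing in `x`, and
`T_r(x) = [b(x), b(x+1)]`.
-/

open Topology Set Function

theorem Antitone.neg_one_pow_mul_lt_of_iterate_lt {α : Type*} [Ring α] [LinearOrder α]
    [IsOrderedRing α] {f : α → α} (hf : Antitone f) (n : ℕ) {a b : α}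
    (h : f^[n] a < f^[n] b) : (-1) ^ n * a < (-1) ^ n * b := by
  induction n generalizing a b with
  | zero => simpa using h
  | succ n ih =>
    rw [iterate_succ_apply', iterate_succ_apply'] at h
    have := ih (hf.reflect_lt h)
    rw [pow_succ, mul_neg_one, neg_mul, neg_mul]
    exact neg_lt_neg this

theorem neg_one_pow_mul_neg_one_pow_mul {R : Type*} [Ring R] (n : ℕ) (a : R) :
    (-1) ^ n * ((-1) ^ n * a) = a := by
  rw [← mul_assoc, ← pow_add, ← two_mul, pow_mul, neg_one_sq, one_pow, one_mul]

def lowerAdjoint (f : ℤ → ℤ) (x : ℤ) : ℤ := sInf {m | x ≤ f m}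

section LowerAdjoint

variable {f : ℤ → ℤ}

theorem gc_lowerAdjoint (hf : Monotone f) (hs : Surjective f) :
    GaloisConnection (lowerAdjoint f) f := by
  intro x m
  obtain ⟨m₀, hm₀⟩ := hs (x - 1)
  have hbdd : BddBelow {m | x ≤ f m} :=
    ⟨m₀, fun m (hm : x ≤ f m) => (hf.reflect_lt (by omega : f m₀ < f m)).le⟩
  obtain ⟨m₁, hm₁⟩ := hs x
  have hmem : x ≤ f (lowerAdjoint f x) := Int.csInf_mem ⟨m₁, hm₁.ge⟩ hbdd
  exact ⟨fun h => hmem.trans (hf h), fun h => csInf_le hbdd h⟩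

theorem lowerAdjoint_strictMono (hf : Monotone f) (hs : Surjective f) :
    StrictMono (lowerAdjoint f) := by
  intro x y hxy
  obtain ⟨m, rfl⟩ := hs x
  have gc := gc_lowerAdjoint hf hs
  by_contra! h
  have : y ≤ f m := (gc y m).1 (h.trans ((gc _ m).2 le_rfl))
  omega

theorem eq_iff_lowerAdjoint_le_and_lt (hf : Monotone f) (hs : Surjective f) {x m : ℤ} :
    f m = x ↔ lowerAdjoint f x ≤ m ∧ m < lowerAdjoint f (x + 1) := by
  have gc := gc_lowerAdjoint hf hs
  rw [gc x m, ← not_le, gc (x + 1) m]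
  omega

theorem lowerAdjoint_id (x : ℤ) : lowerAdjoint id x = x := csInf_Ici

end LowerAdjoint

theorem exists_Ico_abs_mul_sub_le {h e t : ℝ} (hh : 0 < h) (he : 0 ≤ e) {a b : ℤ}
    (hab : a < b) (ha : h * a - e ≤ t) (hb : t ≤ h * b + e) :
    ∃ m : ℤ, a ≤ m ∧ m < b ∧ |h * m - t| ≤ h + e := by
  have hab' : (a : ℝ) + 1 ≤ b := by exact_mod_cast hab
  rcases lt_or_ge t (h * a) with hta | hta
  · exact ⟨a, le_rfl, hab, abs_le.2 ⟨by linarith, by linarith⟩⟩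
  rcases le_or_gt (h * b) t with htb | htb
  · refine ⟨b - 1, by omega, by omega, abs_le.2 ⟨?_, ?_⟩⟩ <;> push_cast <;> nlinarith
  refine ⟨⌊t / h⌋, Int.le_floor.2 ((le_div_iff₀ hh).2 (by linarith)),
    Int.floor_lt.2 ((div_lt_iff₀ hh).2 (by linarith)), abs_le.2 ⟨?_, ?_⟩⟩
  · have := (div_lt_iff₀ hh).1 (Int.lt_floor_add_one (t / h))
    linarith
  · have := (le_div_iff₀ hh).1 (Int.floor_le (t / h))
    linarith

namespace Tile1

variable {r : ℝ}

theorem tau1_antitone (h0 : 0 ≤ r) : Antitone (tau1 r) := fun _ _ hab =>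
  neg_le_neg (Int.floor_le_floor (mul_le_mul_of_nonneg_left (by exact_mod_cast hab) h0))

theorem tau1_surjective (h0 : 0 < r) (h1 : r ≤ 1) : Surjective (tau1 r) := by
  intro y
  refine ⟨⌈-y / r⌉, ?_⟩
  have hle := (div_le_iff₀' h0).1 (Int.le_ceil (-y / r : ℝ))
  have hlt : r * ⌈-y / r⌉ < r * (-y / r + 1) :=
    mul_lt_mul_of_pos_left (Int.ceil_lt_add_one _) h0
  rw [mul_add, mul_div_cancel₀ _ h0.ne'] at hlt
  rw [tau1, neg_eq_iff_eq_neg, Int.floor_eq_iff]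
  push_cast
  constructor <;> linarith

theorem abs_tau1_add_mul_lt (z : ℤ) : |(tau1 r z : ℝ) + r * z| < 1 := by
  have : (tau1 r z : ℝ) + r * z = Int.fract (r * z) := by
    rw [tau1, Int.fract]
    push_cast
    ring
  rw [this, abs_of_nonneg (Int.fract_nonneg _)]
  exact Int.fract_lt_one _

theorem abs_neg_one_pow_mul_tau1_sub_lt (n : ℕ) (m : ℤ) :
    |(((-1) ^ n * tau1 r ((-1) ^ (n + 1) * m) : ℤ) : ℝ) - r * m| < 1 := by
  have hsign : ((-1 : ℝ) ^ n * (-1) ^ (n + 1)) = -1 := by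
    rw [pow_succ, ← mul_assoc, ← mul_pow]
    simp
  set z := (-1) ^ (n + 1) * m with hz
  have : (((-1) ^ n * tau1 r z : ℤ) : ℝ) - r * m = (-1) ^ n * ((tau1 r z : ℝ) + r * z) := by
    rw [hz]
    push_cast
    linear_combination (-(r * m)) * hsign
  rw [this, abs_mul, abs_neg_one_pow, one_mul]
  exact abs_tau1_add_mul_lt _

/-- `τ_r^n` in the coordinate `m = (-1)^n z`, in which the point `(-r)^n z` of level `n`
is `r^n m`. -/
def label (r : ℝ) (n : ℕ) (m : ℤ) : ℤ := (tau1 r)^[n] ((-1) ^ n * m)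

theorem label_zero : label r 0 = id := by
  funext m
  simp [label]

theorem label_succ (n : ℕ) (m : ℤ) :
    label r (n + 1) m = label r n ((-1) ^ n * tau1 r ((-1) ^ (n + 1) * m)) := by
  rw [label, iterate_succ_apply, label, neg_one_pow_mul_neg_one_pow_mul]

theorem label_monotone (h0 : 0 ≤ r) (n : ℕ) : Monotone (label r n) := by
  intro a b hab
  by_contra! h
  have := (tau1_antitone h0).neg_one_pow_mul_lt_of_iterate_lt n h
  rw [neg_one_pow_mul_neg_one_pow_mul, neg_one_pow_mul_neg_one_pow_mul] at this
  omega

theorem label_surjective (h0 : 0 < r) (h1 : r ≤ 1) (n : ℕ) : Surjective (label r n) :=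
  ((tau1_surjective h0 h1).iterate n).comp fun m =>
    ⟨(-1) ^ n * m, neg_one_pow_mul_neg_one_pow_mul n m⟩

theorem gc_label (h0 : 0 < r) (h1 : r ≤ 1) (n : ℕ) :
    GaloisConnection (lowerAdjoint (label r n)) (label r n) :=
  gc_lowerAdjoint (label_monotone h0.le n) (label_surjective h0 h1 n)

def boundarySeq (r : ℝ) (x : ℤ) (n : ℕ) : ℝ := r ^ n * lowerAdjoint (label r n) x

theorem dist_boundarySeq_succ_le (h0 : 0 < r) (h1 : r < 1) (x : ℤ) (n : ℕ) :
    dist (boundarySeq r x n) (boundarySeq r x (n + 1)) ≤ 1 * r ^ n := by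
  set k := lowerAdjoint (label r n) x
  set m := lowerAdjoint (label r (n + 1)) x
  set g : ℤ → ℤ := fun m => (-1) ^ n * tau1 r ((-1) ^ (n + 1) * m)
  have hm : ∀ m', m ≤ m' ↔ k ≤ g m' := fun m' => by
    rw [gc_label h0 h1.le (n + 1) x m', label_succ, ← gc_label h0 h1.le n]
  have hk : (k : ℝ) ≤ g m := by exact_mod_cast (hm m).1 le_rfl
  have hk' : (g (m - 1) : ℝ) + 1 ≤ k := by
    exact_mod_cast lt_of_not_ge (mt (hm (m - 1)).2 (by omega))
  have h₁ := abs_lt.1 (abs_neg_one_pow_mul_tau1_sub_lt (r := r) n m)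
  have h₂ := abs_lt.1 (abs_neg_one_pow_mul_tau1_sub_lt (r := r) n (m - 1))
  rw [Int.cast_sub, Int.cast_one] at h₂
  rw [boundarySeq, boundarySeq, Real.dist_eq, pow_succ,
    show r ^ n * k - r ^ n * r * m = r ^ n * (k - r * m) by ring, abs_mul,
    abs_of_pos (pow_pos h0 n), mul_comm]
  exact mul_le_mul_of_nonneg_right (abs_le.2 ⟨by linarith, by linarith⟩) (pow_pos h0 n).le

def boundary (r : ℝ) (x : ℤ) : ℝ := limUnder atTop (boundarySeq r x)

theorem tendsto_boundarySeq (h0 : 0 < r) (h1 : r < 1) (x : ℤ) :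
    Tendsto (boundarySeq r x) atTop (𝓝 (boundary r x)) :=
  (cauchySeq_of_le_geometric r 1 h1 (dist_boundarySeq_succ_le h0 h1 x)).tendsto_limUnder

theorem dist_boundarySeq_boundary_le (h0 : 0 < r) (h1 : r < 1) (x : ℤ) (n : ℕ) :
    dist (boundarySeq r x n) (boundary r x) ≤ r ^ n / (1 - r) := by
  simpa using dist_le_of_le_geometric_of_tendsto r 1 h1 (dist_boundarySeq_succ_le h0 h1 x)
    (tendsto_boundarySeq h0 h1 x) n

theorem boundary_mono (h0 : 0 < r) (h1 : r < 1) : Monotone (boundary r) := fun x y hxy =>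
  le_of_tendsto_of_tendsto' (tendsto_boundarySeq h0 h1 x) (tendsto_boundarySeq h0 h1 y) fun n =>
    mul_le_mul_of_nonneg_left
      (by exact_mod_cast (lowerAdjoint_strictMono (label_monotone h0.le n)
        (label_surjective h0 h1.le n)).monotone hxy) (pow_pos h0 n).le

theorem abs_boundary_sub_le (h0 : 0 < r) (h1 : r < 1) (x : ℤ) :
    |boundary r x - x| ≤ 1 / (1 - r) := by
  have := dist_boundarySeq_boundary_le h0 h1 x 0
  rw [boundarySeq, label_zero, lowerAdjoint_id, dist_comm, Real.dist_eq] at this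
  simpa using this

theorem mem_tile1_iff {x : ℤ} {t : ℝ} :
    t ∈ tile1 r x ↔ ∃ m : ℕ → ℤ, (∀ n, label r n (m n) = x) ∧
      Tendsto (fun n => r ^ n * (m n : ℝ)) atTop (𝓝 t) := by
  have hpt : ∀ (n : ℕ) (z : ℤ), (-r) ^ n * (z : ℝ) = r ^ n * (((-1) ^ n * z : ℤ) : ℝ) :=
    fun n z => by push_cast; rw [neg_pow, mul_comm ((-1 : ℝ) ^ n)]; ring
  constructor
  · rintro ⟨z, hz, hlim⟩
    refine ⟨fun n => (-1) ^ n * z n, fun n => ?_, by simpa only [hpt] using hlim⟩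
    rw [label, neg_one_pow_mul_neg_one_pow_mul, hz]
  · rintro ⟨m, hm, hlim⟩
    refine ⟨fun n => (-1) ^ n * m n, fun n => hm n, ?_⟩
    simpa only [hpt, neg_one_pow_mul_neg_one_pow_mul] using hlim

theorem tile1_subset_Icc (h0 : 0 < r) (h1 : r < 1) (x : ℤ) :
    tile1 r x ⊆ Icc (boundary r x) (boundary r (x + 1)) := by
  rintro t ht
  obtain ⟨m, hm, hlim⟩ := mem_tile1_iff.1 ht
  have hfib := fun n => (eq_iff_lowerAdjoint_le_and_lt (label_monotone h0.le n)
    (label_surjective h0 h1.le n)).1 (hm n)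
  have hscale := fun n {a b : ℤ} (hab : a ≤ b) =>
    mul_le_mul_of_nonneg_left (Int.cast_le.2 hab) (pow_pos h0 n).le
  exact ⟨le_of_tendsto_of_tendsto' (tendsto_boundarySeq h0 h1 x) hlim
      fun n => hscale n (hfib n).1,
    le_of_tendsto_of_tendsto' hlim (tendsto_boundarySeq h0 h1 (x + 1))
      fun n => hscale n (hfib n).2.le⟩

theorem Icc_subset_tile1 (h0 : 0 < r) (h1 : r < 1) (x : ℤ) :
    Icc (boundary r x) (boundary r (x + 1)) ⊆ tile1 r x := by
  rintro t ⟨hxt, htx⟩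
  have hmono := fun n => label_monotone (r := r) h0.le n
  have hsurj := fun n => label_surjective h0 h1.le n
  have hnear : ∀ n, ∃ m, label r n m = x ∧ |r ^ n * m - t| ≤ r ^ n + r ^ n / (1 - r) := by
    intro n
    have d₁ := abs_le.1 (dist_boundarySeq_boundary_le h0 h1 x n)
    have d₂ := abs_le.1 (dist_boundarySeq_boundary_le h0 h1 (x + 1) n)
    rw [boundarySeq] at d₁ d₂
    obtain ⟨m, ham, hmb, hm⟩ := exists_Ico_abs_mul_sub_le (t := t) (pow_pos h0 n)
      (div_nonneg (pow_pos h0 n).le (sub_pos.2 h1).le)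
      (lowerAdjoint_strictMono (hmono n) (hsurj n) (lt_add_one x))
      (by linarith [d₁.2]) (by linarith [d₂.1])
    exact ⟨m, (eq_iff_lowerAdjoint_le_and_lt (hmono n) (hsurj n)).2 ⟨ham, hmb⟩, hm⟩
  choose m hm using hnear
  have hbound : Tendsto (fun n : ℕ => r ^ n + r ^ n / (1 - r)) atTop (𝓝 0) := by
    have := tendsto_pow_atTop_nhds_zero_of_lt_one h0.le h1
    simpa using this.add (this.div_const (1 - r))
  refine mem_tile1_iff.2 ⟨m, fun n => (hm n).1, tendsto_iff_dist_tendsto_zero.2 ?_⟩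
  exact squeeze_zero (fun _ => dist_nonneg) (fun n => (hm n).2) hbound

theorem tile1_eq_Icc (h0 : 0 < r) (h1 : r < 1) (x : ℤ) :
    tile1 r x = Icc (boundary r x) (boundary r (x + 1)) :=
  (tile1_subset_Icc h0 h1 x).antisymm (Icc_subset_tile1 h0 h1 x)

theorem tile1_inter_subset (h0 : 0 < r) (h1 : r < 1) {x y : ℤ} (hxy : x < y) :
    tile1 r x ∩ tile1 r y ⊆ {boundary r y} := by
  rw [tile1_eq_Icc h0 h1, tile1_eq_Icc h0 h1]
  rintro t ⟨⟨-, htx⟩, hyt, -⟩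
  exact le_antisymm (htx.trans (boundary_mono h0 h1 (by omega))) hyt

theorem iUnion_tile1 (h0 : 0 < r) (h1 : r < 1) : ⋃ x : ℤ, tile1 r x = univ := by
  refine eq_univ_of_forall fun t => mem_iUnion.2 ?_
  have hb := fun x => abs_le.1 (abs_boundary_sub_le h0 h1 x)
  obtain ⟨x, hx, hmax⟩ := Int.exists_greatest_of_bdd (P := fun x => boundary r x ≤ t)
    ⟨⌈t + 1 / (1 - r)⌉, fun x (hx : boundary r x ≤ t) =>
      Int.cast_le (R := ℝ).1 (by linarith [(hb x).1, Int.le_ceil (t + 1 / (1 - r))])⟩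
    ⟨⌊t - 1 / (1 - r)⌋,
      by linarith [(hb ⌊t - 1 / (1 - r)⌋).2, Int.floor_le (t - 1 / (1 - r))]⟩
  refine ⟨x, tile1_eq_Icc h0 h1 x ▸ ⟨hx, le_of_not_ge fun h => ?_⟩⟩
  have := hmax (x + 1) h
  omega

end Tile1

/-- for 0 < r < 1, preimages preserve the order up to sign:
x₀ > y₀ implies (-1)^n xₙ > (-1)^n yₙ for all xₙ ∈ τ_r^{-n}(x₀), yₙ ∈ τ_r^{-n}(y₀);
consequently distinct tiles meet in at most one point and the tiles form a tiling
of ℝ by (possibly degenerate) intervals. -/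
theorem tile1_tiling (r : ℝ) (h0 : 0 < r) (h1 : r < 1) :
    (∀ x0 y0 : ℤ, y0 < x0 → ∀ (n : ℕ) (xn yn : ℤ),
      (tau1 r)^[n] xn = x0 → (tau1 r)^[n] yn = y0 →
        (-1 : ℤ) ^ n * yn < (-1 : ℤ) ^ n * xn) ∧
    (∀ x y : ℤ, x ≠ y → (tile1 r x ∩ tile1 r y).Subsingleton) ∧
    (⋃ x : ℤ, tile1 r x) = Set.univ ∧
    (∀ x : ℤ, ∃ p q : ℝ, p ≤ q ∧ tile1 r x = Set.Icc p q) := by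
  refine ⟨fun x0 y0 h n xn yn hx hy => ?_, fun x y hxy => ?_, Tile1.iUnion_tile1 h0 h1,
    fun x => ⟨_, _, Tile1.boundary_mono h0 h1 (by omega), Tile1.tile1_eq_Icc h0 h1 x⟩⟩
  · exact (Tile1.tau1_antitone h0.le).neg_one_pow_mul_lt_of_iterate_lt n (hy ▸ hx ▸ h)
  · rcases hxy.lt_or_gt with h | h
    · exact subsingleton_singleton.anti (Tile1.tile1_inter_subset h0 h1 h)
    · rw [inter_comm]
      exact subsingleton_singleton.anti (Tile1.tile1_inter_subset h0 h1 h)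
end
end

section
/- Let β > 1 be an algebraic integer with minimal polynomial x^{d+1} + a_d x^d + ... + a_0 = (x - β)(x^d + r_{d-1}x^{d-1} + ... + r_0), and set r = (r_0,...,r_{d-1}). Then for all z ∈ ℤ^d and all n ∈ ℕ, {r·τ_r^n(z)} = T_β^n({r·z}), where T_β(x) = {βx} is the beta-transformation on [0,1). In particular, the restriction of T_β to ℤ[β] ∩ [0,1) is conjugate to τ_r via the bijection z ↦ {r·z}. -/
open Matrix Filter

noncomputable section

/-!
Let `q = X^d + ∑ rᵢ Xⁱ`, so that the minimal polynomial `P` of `β` is `(X - β) q`. Comparing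
coefficients, `β q₀` and `β q_{k+1} - q_k` are integers, whence
`β (r·z + m) ≡ r·(z₁, …, z_{d-1}, m) (mod ℤ)`; for `m = -⌊r·z⌋` this is the conjugacy
`{r·τ_r z} = T_β {r·z}`. The same congruence makes the lattice `ℤ + ℤr₀ + ⋯ + ℤr_{d-1}` stable
under multiplication by `β`, so it contains `ℤ[β]`, and conversely the coefficients of
`q = P / (X - β)` lie in `ℤ[β]`. Thus `(z, m) ↦ r·z + m` maps `ℤ^{d+1}` onto `ℤ[β]`, a free
`ℤ`-module of rank `d + 1`, and such a surjection is injective (Orzech).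
-/

open Polynomial

theorem LinearMap.injective_of_range_eq_adjoin {R S N : Type*} [CommRing R] [IsDomain R]
    [IsIntegrallyClosed R] [CommRing S] [IsDomain S] [Algebra R S] [Module.IsTorsionFree R S]
    [AddCommGroup N] [Module R N] [Module.Free R N] [Module.Finite R N] {x : S}
    (hx : IsIntegral R x) (g : N →ₗ[R] S)
    (hg : LinearMap.range g = Subalgebra.toSubmodule (Algebra.adjoin R {x}))
    (hN : Module.finrank R N = (minpoly R x).natDegree) :
    Function.Injective g := by
  have : Module.Free R (Algebra.adjoin R {x}) := .of_basis (Algebra.adjoin.powerBasis' hx).basis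
  have : Module.Finite R (Algebra.adjoin R {x}) := .of_basis (Algebra.adjoin.powerBasis' hx).basis
  have hrank : Module.finrank R N = Module.finrank R (Algebra.adjoin R {x}) :=
    hN.trans (Algebra.adjoin.powerBasis' hx).finrank.symm
  let e : N ≃ₗ[R] LinearMap.range g := (LinearEquiv.ofFinrankEq N _ hrank).trans
    ((Subalgebra.toSubmoduleEquiv _).symm.trans (LinearEquiv.ofEq _ _ hg.symm))
  rw [← LinearMap.injective_rangeRestrict_iff]
  exact OrzechProperty.injective_of_surjective_of_injective e.toLinearMap g.rangeRestrict
    e.injective g.surjective_rangeRestrict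

section

variable {d : ℕ} {β : ℝ} {r : Fin d → ℝ} {P : ℤ[X]}

def srsPoly (r : Fin d → ℝ) : ℝ[X] := X ^ d + ∑ i : Fin d, C (r i) * X ^ (i : ℕ)

lemma coeff_srsPoly_val (r : Fin d → ℝ) (i : Fin d) : (srsPoly r).coeff i = r i := by
  simp [srsPoly, coeff_X_pow, Fin.val_inj, i.isLt.ne]

lemma coeff_srsPoly_self (r : Fin d → ℝ) : (srsPoly r).coeff d = 1 := by
  simpa [srsPoly] using Finset.sum_eq_zero fun i _ => if_neg i.isLt.ne'

lemma srsDot_add_intCast_eq_sum (r : Fin d → ℝ) (z : Fin d → ℤ) (m : ℤ) :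
    srsDot r z + m =
      ∑ k : Fin (d + 1), (srsPoly r).coeff k * (Fin.snoc z m : Fin (d + 1) → ℤ) k := by
  simp [Fin.sum_univ_castSucc, srsDot, coeff_srsPoly_val, coeff_srsPoly_self]

lemma mul_srsDot_add_intCast (hP : P.map (Int.castRingHom ℝ) = (X - C β) * srsPoly r)
    (z : Fin d → ℤ) (m : ℤ) :
    β * (srsDot r z + m) =
      srsDot r (Fin.tail (Fin.snoc z m : Fin (d + 1) → ℤ)) -
        ∑ k : Fin (d + 1), (P.coeff k * (Fin.snoc z m : Fin (d + 1) → ℤ) k : ℤ) := by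
  have hcoeff k := congrArg (coeff · k) hP
  have h0 : β * (srsPoly r).coeff 0 = -P.coeff 0 := by
    have := hcoeff 0
    simp only [coeff_map, mul_coeff_zero, coeff_sub, coeff_X_zero, coeff_C_zero, eq_intCast] at this
    linarith
  have hsucc (k : ℕ) :
      β * (srsPoly r).coeff (k + 1) = (srsPoly r).coeff k - P.coeff (k + 1) := by
    have := hcoeff (k + 1)
    rw [coeff_X_sub_C_mul, coeff_map] at this
    simp only [eq_intCast] at this
    linarith
  rw [srsDot_add_intCast_eq_sum, Finset.mul_sum, Fin.sum_univ_succ]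
  simp only [Fin.val_zero, Fin.val_succ, ← mul_assoc, h0, hsucc, srsDot, Fin.tail,
    ← coeff_srsPoly_val]
  push_cast
  rw [Fin.sum_univ_succ]
  simp only [Fin.val_zero, Fin.val_succ, sub_mul, Finset.sum_sub_distrib]
  ring

lemma srsTau_eq_tail_snoc (r : Fin d → ℝ) (z : Fin d → ℤ) :
    srsTau r z = Fin.tail (Fin.snoc z (-⌊srsDot r z⌋) : Fin (d + 1) → ℤ) := by
  funext i
  by_cases h : (i : ℕ) + 1 < d
  · simp [srsTau, h, Fin.tail, Fin.snoc]
    rfl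
  · simp [srsTau, h, Fin.tail, Fin.snoc]

lemma fract_srsDot_srsTau (hP : P.map (Int.castRingHom ℝ) = (X - C β) * srsPoly r)
    (z : Fin d → ℤ) :
    Int.fract (srsDot r (srsTau r z)) = Int.fract (β * Int.fract (srsDot r z)) := by
  have hfract : Int.fract (srsDot r z) = srsDot r z + ((-⌊srsDot r z⌋ : ℤ) : ℝ) := by
    rw [Int.cast_neg, ← sub_eq_add_neg, Int.self_sub_floor]
  rw [hfract, mul_srsDot_add_intCast hP, ← srsTau_eq_tail_snoc, Int.fract_sub_intCast]

lemma semiconj_fract_srsDot (hP : P.map (Int.castRingHom ℝ) = (X - C β) * srsPoly r) :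
    Function.Semiconj (fun z => Int.fract (srsDot r z)) (srsTau r)
      (fun x => Int.fract (β * x)) :=
  fract_srsDot_srsTau hP

def srsLatticeMap (r : Fin d → ℝ) : ((Fin d → ℤ) × ℤ) →ₗ[ℤ] ℝ where
  toFun v := srsDot r v.1 + v.2
  map_add' v w := by
    simp only [srsDot, Prod.fst_add, Prod.snd_add, Pi.add_apply, Int.cast_add, mul_add,
      Finset.sum_add_distrib]
    abel
  map_smul' c v := by
    simp [srsDot, Finset.mul_sum, mul_left_comm]

@[simp]
lemma srsLatticeMap_apply (r : Fin d → ℝ) (v : (Fin d → ℤ) × ℤ) :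
    srsLatticeMap r v = srsDot r v.1 + v.2 := rfl

lemma mul_mem_range_srsLatticeMap (hP : P.map (Int.castRingHom ℝ) = (X - C β) * srsPoly r)
    {x : ℝ} (hx : x ∈ LinearMap.range (srsLatticeMap r)) :
    β * x ∈ LinearMap.range (srsLatticeMap r) := by
  obtain ⟨⟨z, m⟩, rfl⟩ := hx
  refine ⟨(Fin.tail (Fin.snoc z m : Fin (d + 1) → ℤ),
    -∑ k : Fin (d + 1), P.coeff k * (Fin.snoc z m : Fin (d + 1) → ℤ) k), ?_⟩
  rw [srsLatticeMap_apply, srsLatticeMap_apply, mul_srsDot_add_intCast hP, Int.cast_neg,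
    sub_eq_add_neg]

lemma pow_mem_range_srsLatticeMap (hP : P.map (Int.castRingHom ℝ) = (X - C β) * srsPoly r)
    (n : ℕ) : β ^ n ∈ LinearMap.range (srsLatticeMap r) := by
  induction n with
  | zero => exact ⟨(0, 1), by simp [srsDot]⟩
  | succ n ih => simpa [pow_succ'] using mul_mem_range_srsLatticeMap hP ih

lemma coeff_srsPoly_mem_adjoin (hP : P.map (Int.castRingHom ℝ) = (X - C β) * srsPoly r)
    (k : ℕ) : (srsPoly r).coeff k ∈ Algebra.adjoin ℤ {β} := by
  have hq : srsPoly r = P.map (Int.castRingHom ℝ) /ₘ (X - C β) := by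
    rw [hP, mul_divByMonic_cancel_left _ (monic_X_sub_C β)]
  rw [hq, coeff_divByMonic_X_sub_C]
  refine Subalgebra.sum_mem _ fun i _ => mul_mem (pow_mem ?_ _) ?_
  · exact Algebra.self_mem_adjoin_singleton ℤ β
  · simp [intCast_mem]

lemma range_srsLatticeMap (hP : P.map (Int.castRingHom ℝ) = (X - C β) * srsPoly r) :
    LinearMap.range (srsLatticeMap r) = Subalgebra.toSubmodule (Algebra.adjoin ℤ {β}) := by
  apply le_antisymm
  · rintro _ ⟨⟨z, m⟩, rfl⟩
    show srsDot r z + m ∈ Algebra.adjoin ℤ {β}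
    refine add_mem (Subalgebra.sum_mem _ fun i _ => mul_mem ?_ (intCast_mem _ _))
      (intCast_mem _ _)
    simpa [coeff_srsPoly_val] using coeff_srsPoly_mem_adjoin hP i
  · intro x hx
    rw [Subalgebra.mem_toSubmodule, Algebra.adjoin_singleton_eq_range_aeval] at hx
    obtain ⟨p, rfl⟩ := hx
    rw [AlgHom.toRingHom_eq_coe, RingHom.coe_coe, aeval_eq_sum_range]
    exact Submodule.sum_mem _ fun i _ =>
      Submodule.smul_mem _ _ (pow_mem_range_srsLatticeMap hP i)

lemma bijOn_fract_srsDot (hinj : Function.Injective (srsLatticeMap r)) :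
    Set.BijOn (fun z => Int.fract (srsDot r z)) Set.univ
      {x | x ∈ LinearMap.range (srsLatticeMap r) ∧ x ∈ Set.Ico (0 : ℝ) 1} := by
  have hfract (z : Fin d → ℤ) :
      Int.fract (srsDot r z) = srsLatticeMap r (z, -⌊srsDot r z⌋) := by
    rw [srsLatticeMap_apply, Int.cast_neg, ← sub_eq_add_neg, Int.self_sub_floor]
  refine ⟨fun z _ => ⟨⟨_, (hfract z).symm⟩, Int.fract_nonneg _, Int.fract_lt_one _⟩,
    fun z _ z' _ h => ?_, ?_⟩
  · simp only [hfract] at h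
    exact congrArg Prod.fst (hinj h)
  · rintro _ ⟨⟨⟨z, m⟩, rfl⟩, hx⟩
    refine ⟨z, trivial, ?_⟩
    show Int.fract (srsDot r z) = srsLatticeMap r (z, m)
    rw [← Int.fract_eq_self.mpr hx, srsLatticeMap_apply, Int.fract_add_intCast]

end

theorem srs_beta_conjugacy_general (d : ℕ) (β : ℝ)
    (hint : IsIntegral ℤ β) (r : Fin d → ℝ)
    (hdeg : (minpoly ℤ β).natDegree = d + 1)
    (hfact : (minpoly ℤ β).map (Int.castRingHom ℝ) =
      (Polynomial.X - Polynomial.C β) *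
        (Polynomial.X ^ d + ∑ i : Fin d, Polynomial.C (r i) * Polynomial.X ^ (i : ℕ))) :
    (∀ (z : Fin d → ℤ) (n : ℕ),
      Int.fract (srsDot r ((srsTau r)^[n] z)) =
        (fun x : ℝ => Int.fract (β * x))^[n] (Int.fract (srsDot r z))) ∧
    Set.BijOn (fun z : Fin d → ℤ => Int.fract (srsDot r z)) Set.univ
      {x : ℝ | x ∈ Algebra.adjoin ℤ ({β} : Set ℝ) ∧ x ∈ Set.Ico (0:ℝ) 1} := by
  have hrange := range_srsLatticeMap hfact
  refine ⟨fun z n => (semiconj_fract_srsDot hfact).iterate_right n z, ?_⟩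
  have hinj := (srsLatticeMap r).injective_of_range_eq_adjoin hint hrange (by simp [hdeg])
  simpa [hrange] using bijOn_fract_srsDot hinj

/-- if β > 1 is an algebraic integer with minimal polynomial
(x-β)(x^d + r_{d-1}x^{d-1} + ⋯ + r_0), then {r·τ_r^n(z)} = T_β^n({r·z}) for all
z ∈ ℤ^d and n; in particular z ↦ {r·z} is a bijection from ℤ^d onto
ℤ[β] ∩ [0,1), conjugating τ_r with the β-transformation. -/
theorem srs_beta_conjugacy (d : ℕ) (hd : 0 < d) (β : ℝ) (hβ : 1 < β)
    (hint : IsIntegral ℤ β) (r : Fin d → ℝ)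
    (hdeg : (minpoly ℤ β).natDegree = d + 1)
    (hfact : (minpoly ℤ β).map (Int.castRingHom ℝ) =
      (Polynomial.X - Polynomial.C β) *
        (Polynomial.X ^ d + ∑ i : Fin d, Polynomial.C (r i) * Polynomial.X ^ (i : ℕ))) :
    (∀ (z : Fin d → ℤ) (n : ℕ),
      Int.fract (srsDot r ((srsTau r)^[n] z)) =
        (fun x : ℝ => Int.fract (β * x))^[n] (Int.fract (srsDot r z))) ∧
    Set.BijOn (fun z : Fin d → ℤ => Int.fract (srsDot r z)) Set.univ
      {x : ℝ | x ∈ Algebra.adjoin ℤ ({β} : Set ℝ) ∧ x ∈ Set.Ico (0:ℝ) 1} :=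
  srs_beta_conjugacy_general d β hint r hdeg hfact

end
end

section
/- Let A = a_d x^d + ... + a_1 x + a_0 ∈ ℤ[x] with a_0 ≥ 2 and a_d ≠ 0, and r = (a_d/a_0, a_{d-1}/a_0, ..., a_1/a_0). On the Brunotte module Λ_A spanned by W_0 = a_d, W_k = X W_{k-1} + a_{d-k} (1 ≤ k ≤ d-1) in ℤ[x]/Aℤ[x], the backward division map D_A satisfies D_A(Σ_{k=0}^{d-1} z_k W_k) = Σ_{k=0}^{d-2} z_{k+1} W_k - ⌊(z_0 a_d + ... + z_{d-1} a_1)/a_0⌋ W_{d-1}; hence D_A restricted to Λ_A is conjugate to τ_r via the coordinate map Ψ_A. -/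
/-! Dividing by `X` shifts the Brunotte basis, `divX W_{k+1} = W_k` and `divX W_0 = 0`, so the
`divX` part of `D_A` shifts the coordinates. The constant term of `∑ z_k W_k` is
`z_0 a_d + ⋯ + z_{d-1} a_1`, whose floor quotient by `a_0` is `⌊r·z⌋`, and the correction term
`⌊r·z⌋ · divX A` is `⌊r·z⌋ W_{d-1}`. So the identity already holds for representatives in `ℤ[X]`. -/

open Matrix Filter

noncomputable section

/-- Brunotte basis polynomials: W_0 = a_d, W_{k+1} = X·W_k + a_{d-k-1}. -/
def brunotteW (A : Polynomial ℤ) : ℕ → Polynomial ℤ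
  | 0 => Polynomial.C (A.coeff A.natDegree)
  | k + 1 => Polynomial.X * brunotteW A k + Polynomial.C (A.coeff (A.natDegree - (k + 1)))

/-- Backward division map on representatives:
D_A(P) = Σ p_{i+1}X^i - ⌊p_0/a_0⌋ Σ a_{i+1}X^i. -/
def backDiv (A P : Polynomial ℤ) : Polynomial ℤ :=
  P.divX - Polynomial.C (Int.fdiv (P.coeff 0) (A.coeff 0)) * A.divX

open Polynomial

namespace Polynomial

variable {R : Type*} [Semiring R]

theorem coeff_divX_iterate (p : R[X]) (m n : ℕ) : (divX^[m] p).coeff n = p.coeff (n + m) := by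
  induction m generalizing n with
  | zero => rfl
  | succ m ih =>
    rw [Function.iterate_succ_apply', coeff_divX, ih, Nat.add_right_comm, Nat.add_assoc]

theorem divX_X_mul (p : R[X]) : divX (X * p) = p := by
  ext n
  rw [coeff_divX, coeff_X_mul]

end Polynomial

theorem Int.floor_intCast_div_intCast {k : Type*} [Field k] [LinearOrder k] [IsOrderedRing k]
    [FloorRing k] (a : ℤ) {b : ℤ} (hb : 0 ≤ b) : ⌊(a : k) / b⌋ = a.fdiv b := by
  rw [Int.floor_div_cast_of_nonneg hb, Int.floor_intCast, Int.fdiv_eq_ediv_of_nonneg _ hb]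

theorem srsDot_of_eq_intCast_div {d : ℕ} {r : Fin d → ℝ} {c : Fin d → ℤ} {b : ℤ}
    (hr : ∀ i, r i = (c i : ℝ) / b) (z : Fin d → ℤ) :
    srsDot r z = ((∑ i, z i * c i : ℤ) : ℝ) / b := by
  simp only [srsDot, hr, Int.cast_sum, Int.cast_mul, Finset.sum_div]
  exact Finset.sum_congr rfl fun i _ => by ring

theorem sum_srsTau_zsmul {M : Type*} [AddCommGroup M] {m : ℕ} (r : Fin (m + 1) → ℝ)
    (z : Fin (m + 1) → ℤ) (w : ℕ → M) :
    ∑ k, srsTau r z k • w k = ∑ k : Fin m, z k.succ • w k - ⌊srsDot r z⌋ • w m := by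
  rw [Fin.sum_univ_castSucc, sub_eq_add_neg, ← neg_zsmul]
  congr 1
  · refine Finset.sum_congr rfl fun k _ => ?_
    simp [srsTau, Fin.succ]
  · simp [srsTau]

section Brunotte

variable (A : ℤ[X])

theorem brunotteW_coeff_zero (k : ℕ) : (brunotteW A k).coeff 0 = A.coeff (A.natDegree - k) := by
  cases k <;> simp [brunotteW, mul_coeff_zero]

theorem divX_brunotteW_zero : (brunotteW A 0).divX = 0 :=
  divX_C _

theorem divX_brunotteW_succ (k : ℕ) : (brunotteW A (k + 1)).divX = brunotteW A k := by
  rw [brunotteW, divX_add, divX_C, add_zero, divX_X_mul]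

theorem brunotteW_eq_divX_iterate {k : ℕ} (hk : k ≤ A.natDegree) :
    brunotteW A k = divX^[A.natDegree - k] A := by
  induction k with
  | zero =>
    ext n
    rw [coeff_divX_iterate, brunotteW, coeff_C, Nat.sub_zero]
    split_ifs with hn
    · rw [hn, zero_add]
    · exact (coeff_eq_zero_of_natDegree_lt (by omega)).symm
  | succ k ih =>
    have hpred : A.natDegree - k = A.natDegree - (k + 1) + 1 := by omega
    conv_rhs => rw [← X_mul_divX_add (divX^[A.natDegree - (k + 1)] A)]
    rw [brunotteW, ih (by omega), hpred, Function.iterate_succ_apply', coeff_divX_iterate,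
      zero_add]

theorem brunotteW_eq_divX {m : ℕ} (hA : A.natDegree = m + 1) : brunotteW A m = A.divX := by
  rw [brunotteW_eq_divX_iterate A (by omega), hA, Nat.add_sub_cancel_left, Function.iterate_one]

theorem divX_sum_zsmul_brunotteW {m : ℕ} (z : Fin (m + 1) → ℤ) :
    (∑ k, z k • brunotteW A k).divX = ∑ k : Fin m, z k.succ • brunotteW A k := by
  simp only [← divX_hom_toFun, map_sum, map_zsmul]
  simp [Fin.sum_univ_succ, divX_brunotteW_zero, divX_brunotteW_succ]

theorem coeff_zero_sum_zsmul_brunotteW {n : ℕ} (z : Fin n → ℤ) :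
    (∑ k, z k • brunotteW A k).coeff 0 = ∑ k, z k * A.coeff (A.natDegree - k) := by
  simp [brunotteW_coeff_zero]

theorem backDiv_sum_zsmul_brunotteW {m : ℕ} (hA : A.natDegree = m + 1) (ha0 : 0 ≤ A.coeff 0)
    (r : Fin (m + 1) → ℝ)
    (hr : ∀ i : Fin (m + 1), r i = (A.coeff (m + 1 - (i : ℕ)) : ℝ) / (A.coeff 0 : ℝ))
    (z : Fin (m + 1) → ℤ) :
    backDiv A (∑ k, z k • brunotteW A k) = ∑ k, srsTau r z k • brunotteW A k := by
  rw [backDiv, divX_sum_zsmul_brunotteW, coeff_zero_sum_zsmul_brunotteW, sum_srsTau_zsmul,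
    srsDot_of_eq_intCast_div hr, Int.floor_intCast_div_intCast _ ha0, hA, brunotteW_eq_divX A hA,
    smul_eq_C_mul]

end Brunotte

theorem backDiv_brunotte_conjugate_srsTau_general (A : Polynomial ℤ)
    (hd : 0 < A.natDegree) (ha0 : 2 ≤ A.coeff 0)
    (r : Fin A.natDegree → ℝ)
    (hr : ∀ i : Fin A.natDegree,
      r i = (A.coeff (A.natDegree - (i : ℕ)) : ℝ) / (A.coeff 0 : ℝ))
    (z : Fin A.natDegree → ℤ) :
    Ideal.Quotient.mk (Ideal.span {A})
        (backDiv A (∑ k : Fin A.natDegree, z k • brunotteW A (k : ℕ))) =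
      Ideal.Quotient.mk (Ideal.span {A})
        (∑ k : Fin A.natDegree, (srsTau r z) k • brunotteW A (k : ℕ)) := by
  obtain ⟨m, hm⟩ : ∃ m, A.natDegree = m + 1 := ⟨A.natDegree - 1, by omega⟩
  congr 1
  -- `A.natDegree` occurs in the types of `r` and `z`, so they are rewritten together with the goal.
  revert r z
  rw [hm]
  exact backDiv_sum_zsmul_brunotteW A hm (by omega)

/-- on the Brunotte module, the backward division map satisfies
D_A(Σ z_k W_k) = Σ_{k≤d-2} z_{k+1} W_k - ⌊(z_0 a_d + ⋯ + z_{d-1} a_1)/a_0⌋ W_{d-1}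
= Σ_k (τ_r z)_k W_k in ℤ[x]/Aℤ[x]; hence D_A restricted to Λ_A is conjugate to τ_r
via the coordinate map Ψ_A, where r = (a_d/a_0, …, a_1/a_0). -/
theorem backDiv_brunotte_conjugate_srsTau (A : Polynomial ℤ)
    (hd : 0 < A.natDegree) (ha0 : 2 ≤ A.coeff 0)
    (had : A.coeff A.natDegree ≠ 0)
    (r : Fin A.natDegree → ℝ)
    (hr : ∀ i : Fin A.natDegree,
      r i = (A.coeff (A.natDegree - (i : ℕ)) : ℝ) / (A.coeff 0 : ℝ))
    (z : Fin A.natDegree → ℤ) :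
    Ideal.Quotient.mk (Ideal.span {A})
        (backDiv A (∑ k : Fin A.natDegree, z k • brunotteW A (k : ℕ))) =
      Ideal.Quotient.mk (Ideal.span {A})
        (∑ k : Fin A.natDegree, (srsTau r z) k • brunotteW A (k : ℕ)) :=
  backDiv_brunotte_conjugate_srsTau_general A hd ha0 r hr z
end
end
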